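/- For all k₁, k₂ ∈ ℂ and every fixed r′ ∈ ℝ³, the vector field r ↦ ∇_r[G_{k₂}(r, r′) − G_{k₁}(r, r′)] + ((k₂² − k₁²)/(8π)) · (r − r′)/‖r − r′‖ tends to the zero vector as r → r′ (through points r ≠ r′); that is, ∇_r[G_{k₂} − G_{k₁}](r, r′) = −((k₂² − k₁²)/(8π)) (r − r′)/‖r − r′‖ + o(1) as ‖r − r′‖ → 0. -/

import Mathlib

/-- Partial derivative in the `i`-th coordinate of a complex-valued function on `ℝ³`. -/
noncomputable def pderiv3 (i : Fin 3) (f : EuclideanSpace ℝ (Fin 3) → ℂ)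
    (r : EuclideanSpace ℝ (Fin 3)) : ℂ :=
  deriv (fun t : ℝ => f (WithLp.toLp 2 (Function.update r i t))) (r i)

/-- The gradient of a complex-valued function on `ℝ³`, computed componentwise. -/
noncomputable def gradC (f : EuclideanSpace ℝ (Fin 3) → ℂ)
    (r : EuclideanSpace ℝ (Fin 3)) : EuclideanSpace ℂ (Fin 3) :=
  WithLp.toLp 2 (fun i => pderiv3 i f r)

/-- The unit vector `(r − r′)/‖r − r′‖`, regarded as a complex vector. -/
noncomputable def unitVec (r r' : EuclideanSpace ℝ (Fin 3)) : EuclideanSpace ℂ (Fin 3) :=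
  WithLp.toLp 2 (fun i => (((r - r') i / ‖r - r'‖ : ℝ) : ℂ))

/-- The free-space Helmholtz Green function with wavenumber `k`:
`G_k(r, r′) = exp(i k ‖r − r′‖)/(4π ‖r − r′‖)`. -/
noncomputable def green (k : ℂ) (r r' : EuclideanSpace ℝ (Fin 3)) : ℂ :=
  Complex.exp (Complex.I * k * (‖r - r'‖ : ℂ)) / (4 * (Real.pi : ℂ) * (‖r - r'‖ : ℂ))

/-!
Writing `ρ = ‖r - r'‖`, the Green function is the radial profile `φ_k(ρ) = e^{ikρ}/(4πρ)`, so its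
gradient is `φ_k'(ρ)` times the unit vector `(r - r')/ρ`. From `e^z (z - 1) = -1 + z²/2 + O(z³)`
with `z = ikρ` one gets `φ_k'(ρ) = -1/(4πρ²) - k²/(8π) + O(ρ)`; the singular term is independent
of `k` and cancels in `φ_{k₂}' - φ_{k₁}'`, leaving `-(k₂² - k₁²)/(8π) + O(ρ)`.
-/

open Complex Filter Asymptotics Topology

theorem Complex.exp_mul_sub_one_add_one_sub_isLittleO :
    (fun z : ℂ => exp z * (z - 1) + 1 - z ^ 2 / 2) =o[𝓝 0] (· ^ 2) := by
  have hbdd : (fun z : ℂ => z - 1) =O[𝓝 0] (fun _ => (1 : ℂ)) :=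
    ((continuous_id.sub continuous_const).tendsto 0).isBigO_one ℂ
  have hprod := hbdd.mul (exp_sub_sum_range_isBigO_pow 3)
  simp only [one_mul] at hprod
  -- `exp z * (z - 1) + 1 - z²/2 = (z - 1) * (exp z - (1 + z + z²/2)) + z³/2`
  have hO : (fun z : ℂ => exp z * (z - 1) + 1 - z ^ 2 / 2) =O[𝓝 0] (· ^ 3) := by
    refine (hprod.add ((isBigO_refl (· ^ 3) _).const_mul_left (1 / 2 : ℂ))).congr_left fun z => ?_
    simp only [Finset.sum_range_succ, Finset.sum_range_zero]
    norm_num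
    ring
  exact hO.trans_isLittleO (isLittleO_pow_pow (by norm_num))

theorem tendsto_exp_mul_sub_one_add_one_sub_div_sq (k : ℂ) :
    Tendsto (fun ρ : ℝ =>
        (exp (I * k * ρ) * (I * k * ρ - 1) + 1 - (I * k * ρ) ^ 2 / 2) / (ρ : ℂ) ^ 2)
      (𝓝 0) (𝓝 0) := by
  have hlin : Tendsto (fun ρ : ℝ => I * k * ρ) (𝓝 0) (𝓝 0) :=
    Continuous.tendsto' (by fun_prop) _ _ (by simp)
  have hsq : (fun ρ : ℝ => (I * k * ρ) ^ 2) =O[𝓝 0] (fun ρ : ℝ => (ρ : ℂ) ^ 2) :=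
    (isBigO_const_mul_self ((I * k) ^ 2) (fun ρ : ℝ => (ρ : ℂ) ^ 2) _).congr_left
      fun ρ => by ring
  exact ((exp_mul_sub_one_add_one_sub_isLittleO.comp_tendsto hlin).trans_isBigO
    hsq).tendsto_div_nhds_zero

noncomputable def greenRadial (k : ℂ) (ρ : ℝ) : ℂ :=
  exp (I * k * ρ) / (4 * (Real.pi : ℂ) * ρ)

theorem hasDerivAt_greenRadial (k : ℂ) {ρ : ℝ} (hρ : ρ ≠ 0) :
    HasDerivAt (greenRadial k)
      (exp (I * k * ρ) * (I * k * ρ - 1) / (4 * (Real.pi : ℂ) * (ρ : ℂ) ^ 2)) ρ := by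
  have hden : 4 * (Real.pi : ℂ) * ρ ≠ 0 := by simp [Real.pi_ne_zero, hρ]
  have hnum : HasDerivAt (fun w : ℂ => exp (I * k * w)) (exp (I * k * ρ) * (I * k)) ρ :=
    ((hasDerivAt_id _).const_mul (I * k)).cexp.congr_deriv (by simp)
  have hlin : HasDerivAt (fun w : ℂ => 4 * (Real.pi : ℂ) * w) (4 * Real.pi) ρ :=
    ((hasDerivAt_id _).const_mul _).congr_deriv (by simp)
  refine ((hnum.div hlin hden).comp_ofReal).congr_deriv ?_
  field_simp

theorem tendsto_deriv_greenRadial_sub_add (k₁ k₂ : ℂ) :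
    Tendsto (fun ρ => deriv (greenRadial k₂) ρ - deriv (greenRadial k₁) ρ
        + (k₂ ^ 2 - k₁ ^ 2) / (8 * (Real.pi : ℂ))) (𝓝[≠] 0) (𝓝 0) := by
  have hlim := ((tendsto_exp_mul_sub_one_add_one_sub_div_sq k₂).sub
    (tendsto_exp_mul_sub_one_add_one_sub_div_sq k₁)).div_const (4 * (Real.pi : ℂ))
  rw [sub_zero, zero_div] at hlim
  refine (hlim.mono_left nhdsWithin_le_nhds).congr' ?_
  filter_upwards [self_mem_nhdsWithin] with ρ (hρ : ρ ≠ 0)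
  rw [(hasDerivAt_greenRadial k₂ hρ).deriv, (hasDerivAt_greenRadial k₁ hρ).deriv]
  have : (ρ : ℂ) ≠ 0 := by exact_mod_cast hρ
  simp only [mul_pow, I_sq]
  field_simp
  ring

theorem HasDerivAt.norm {F : Type*} [NormedAddCommGroup F] [InnerProductSpace ℝ F]
    {f : ℝ → F} {f' : F} {x : ℝ} (hf : HasDerivAt f f' x) (h0 : f x ≠ 0) :
    HasDerivAt (fun t => ‖f t‖) (Inner.inner ℝ (f x) f' / ‖f x‖) x := by
  have h := hf.norm_sq.sqrt (by positivity)
  simp only [Real.sqrt_sq (norm_nonneg _)] at h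
  exact h.congr_deriv (by field_simp)

theorem EuclideanSpace.hasDerivAt_toLp_update {ι : Type*} [Fintype ι] [DecidableEq ι]
    (x : EuclideanSpace ℝ ι) (i : ι) (t : ℝ) :
    HasDerivAt (fun t => WithLp.toLp 2 (Function.update x i t)) (EuclideanSpace.single i 1) t :=
  (PiLp.continuousLinearEquiv 2 ℝ _).symm.hasFDerivAt.comp_hasDerivAt t
    (hasDerivAt_update x.ofLp i t)

theorem hasDerivAt_comp_norm_sub_update {φ : ℝ → ℂ} {φ' : ℂ} {r r' : EuclideanSpace ℝ (Fin 3)}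
    (hφ : HasDerivAt φ φ' ‖r - r'‖) (h : r ≠ r') (i : Fin 3) :
    HasDerivAt (fun t => φ ‖WithLp.toLp 2 (Function.update r i t) - r'‖)
      (φ' * unitVec r r' i) (r i) := by
  have hnorm := HasDerivAt.norm
    ((EuclideanSpace.hasDerivAt_toLp_update r i (r i)).sub_const r')
    (by simpa [sub_eq_zero] using h)
  simp only [Function.update_eq_self, WithLp.toLp_ofLp] at hnorm
  refine (hφ.scomp_of_eq (r i) hnorm (by simp)).congr_deriv ?_
  simp [unitVec, EuclideanSpace.inner_single_right, mul_comm]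

theorem gradC_comp_norm_sub {φ : ℝ → ℂ} {r r' : EuclideanSpace ℝ (Fin 3)}
    (hφ : DifferentiableAt ℝ φ ‖r - r'‖) (h : r ≠ r') :
    gradC (fun x => φ ‖x - r'‖) r = deriv φ ‖r - r'‖ • unitVec r r' := by
  ext i
  exact (hasDerivAt_comp_norm_sub_update hφ.hasDerivAt h i).deriv

theorem norm_unitVec {r r' : EuclideanSpace ℝ (Fin 3)} (h : r ≠ r') : ‖unitVec r r'‖ = 1 := by
  rw [← norm_smul_inv_norm (𝕜 := ℝ) (sub_ne_zero.2 h), EuclideanSpace.norm_eq,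
    EuclideanSpace.norm_eq]
  simp [unitVec, div_eq_inv_mul, -Complex.ofReal_sub, Complex.norm_real]

/-- For all `k₁, k₂ ∈ ℂ` and every fixed `r′ ∈ ℝ³`, the vector field
`r ↦ ∇_r[G_{k₂}(r, r′) − G_{k₁}(r, r′)] + ((k₂² − k₁²)/(8π)) (r − r′)/‖r − r′‖`
tends to the zero vector as `r → r′` (through points `r ≠ r′`); that is,
`∇_r[G_{k₂} − G_{k₁}](r, r′) = −((k₂² − k₁²)/(8π)) (r − r′)/‖r − r′‖ + o(1)`
as `‖r − r′‖ → 0`. -/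
theorem stmt_6 (k₁ k₂ : ℂ) (r' : EuclideanSpace ℝ (Fin 3)) :
    Filter.Tendsto
      (fun r : EuclideanSpace ℝ (Fin 3) =>
        gradC (fun x => green k₂ x r' - green k₁ x r') r +
          ((k₂ ^ 2 - k₁ ^ 2) / (8 * (Real.pi : ℂ))) • unitVec r r')
      (nhdsWithin r' {r'}ᶜ) (nhds 0) := by
  have hρ : Tendsto (fun r => ‖r - r'‖) (𝓝[≠] r') (𝓝[≠] 0) :=
    (tendsto_norm_sub_self_nhdsNE r').mono_right (nhdsWithin_mono _ fun _ h => ne_of_gt h)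
  have hlim := (tendsto_deriv_greenRadial_sub_add k₁ k₂).comp hρ
  refine squeeze_zero_norm' ?_ (by simpa using hlim.norm)
  filter_upwards [self_mem_nhdsWithin] with r (hr : r ≠ r')
  have hρ0 : ‖r - r'‖ ≠ 0 := norm_ne_zero_iff.2 (sub_ne_zero.2 hr)
  have h₂ := (hasDerivAt_greenRadial k₂ hρ0).differentiableAt
  have h₁ := (hasDerivAt_greenRadial k₁ hρ0).differentiableAt
  have hgrad : gradC (fun x => green k₂ x r' - green k₁ x r') r
      = (deriv (greenRadial k₂) ‖r - r'‖ - deriv (greenRadial k₁) ‖r - r'‖) • unitVec r r' := by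
    rw [← deriv_sub h₂ h₁]
    -- `green k x r'` unfolds to `greenRadial k ‖x - r'‖`
    exact gradC_comp_norm_sub (h₂.sub h₁) hr
  rw [hgrad, ← add_smul, norm_smul, norm_unitVec hr, mul_one]
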